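/- Let g : ℝ^p → ℝ be strictly convex with strong convexity modulus implied by l·I ⪯ ∇²g, 0 < l, with ∇g Lipschitz of constant Λ, let τ ∈ ℝ^p have nonnegative entries, and let 0 < ϖ < 2/Λ. Then the fixed-point iteration b^(n+1) = S(b^(n) - ϖ∇g(b^(n)); ϖτ) converges to the unique minimizer of β ↦ g(β) + Σ_j τ_j|β_j|. -/

import Mathlib

/-!
The map `T x = S(x - ϖ ∇g x; ϖ τ)` is a contraction of Euclidean space. Soft-thresholding is
nonexpansive, and the gradient step `x ↦ x - ϖ ∇g x` has derivative `1 - ϖ ∇²g`, a self-adjoint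
operator with spectrum in `[1 - ϖ Λ, 1 - ϖ l]`, hence of norm `< 1` when `0 < ϖ < 2 / Λ`.
Banach's fixed point theorem makes the iterates converge to the fixed point `β*` of `T`.
Soft-thresholding is the proximal map of the weighted `ℓ¹` norm, so at `β*` the vector `-∇g β*`
is a subgradient of `β ↦ ∑ τ_j |β_j|`; together with the strict first-order inequality of the
strictly convex `g`, this makes `β*` the unique minimizer.
-/

/-- Univariate soft-thresholding operator. -/
noncomputable def soft (u v : ℝ) : ℝ := Real.sign u * max (|u| - v) 0

/-- Componentwise soft-thresholding map. -/
noncomputable def softVec {p : ℕ} (u v : EuclideanSpace ℝ (Fin p)) :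
    EuclideanSpace ℝ (Fin p) :=
  (WithLp.equiv 2 (Fin p → ℝ)).symm fun j => soft (u j) (v j)

open InnerProductSpace RealInnerProductSpace Set

theorem soft_eq_max {u v : ℝ} (hv : 0 ≤ v) : soft u v = max (u - v) (min (u + v) 0) := by
  rcases lt_trichotomy u 0 with hu | rfl | hu
  · rw [soft, Real.sign_of_neg hu, abs_of_neg hu]
    rcases le_total (u + v) 0 with h | h
    · rw [max_eq_left (by linarith), min_eq_left h, max_eq_right (by linarith)]; ring
    · rw [max_eq_right (by linarith), min_eq_right h, max_eq_right (by linarith)]; ring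
  · simp [soft, hv]
  · rw [soft, Real.sign_of_pos hu, abs_of_pos hu, min_eq_right (by linarith)]
    simp

theorem abs_soft_sub_soft_le {v : ℝ} (hv : 0 ≤ v) (u u' : ℝ) :
    |soft u v - soft u' v| ≤ |u - u'| := by
  rw [soft_eq_max hv, soft_eq_max hv]
  refine (abs_max_sub_max_le_max _ _ _ _).trans (max_le (by rw [sub_sub_sub_cancel_right]) ?_)
  exact (abs_min_sub_min_le_max _ _ _ _).trans (by simp)

theorem sub_soft_mul_sub_soft_le {u v : ℝ} (hv : 0 ≤ v) (s : ℝ) :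
    (u - soft u v) * (s - soft u v) ≤ v * |s| - v * |soft u v| := by
  rw [soft_eq_max hv]
  rcases le_total v u with h | h
  · rw [min_eq_right (by linarith), max_eq_left (by linarith), abs_of_nonneg (sub_nonneg.2 h)]
    nlinarith [le_abs_self s]
  rcases le_total u (-v) with h' | h'
  · rw [min_eq_left (by linarith), max_eq_right (by linarith),
      abs_of_nonpos (show u + v ≤ 0 by linarith)]
    nlinarith [neg_abs_le s]
  · rw [min_eq_right (by linarith), max_eq_right (by linarith)]
    simp only [sub_zero, abs_zero, mul_zero]
    calc u * s ≤ |u| * |s| := by rw [← abs_mul]; exact le_abs_self _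
      _ ≤ v * |s| := by gcongr; exact abs_le.2 ⟨h', h⟩

section softVec

variable {p : ℕ}

theorem softVec_apply (u v : EuclideanSpace ℝ (Fin p)) (j : Fin p) :
    softVec u v j = soft (u j) (v j) := rfl

theorem dist_softVec_le {w : EuclideanSpace ℝ (Fin p)} (hw : ∀ j, 0 ≤ w j)
    (u u' : EuclideanSpace ℝ (Fin p)) : dist (softVec u w) (softVec u' w) ≤ dist u u' := by
  rw [EuclideanSpace.dist_eq, EuclideanSpace.dist_eq]
  gcongr with j
  simp only [softVec_apply, Real.dist_eq]
  exact abs_soft_sub_soft_le (hw j) _ _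

theorem neg_inner_sub_le_of_softVec_eq {x d t : EuclideanSpace ℝ (Fin p)} {ϖ : ℝ} (hϖ : 0 < ϖ)
    (ht : ∀ j, 0 ≤ t j) (hx : softVec (x - ϖ • d) (ϖ • t) = x) (y : EuclideanSpace ℝ (Fin p)) :
    -⟪d, y - x⟫ ≤ ∑ j, t j * |y j| - ∑ j, t j * |x j| := by
  have hcoord : ∀ j, -(d j * (y j - x j)) ≤ t j * |y j| - t j * |x j| := fun j => by
    have h := sub_soft_mul_sub_soft_le (u := x j - ϖ * d j) (mul_nonneg hϖ.le (ht j)) (y j)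
    have hxj : soft (x j - ϖ * d j) (ϖ * t j) = x j := congrArg (· j) hx
    rw [hxj] at h
    exact le_of_mul_le_mul_left (by linarith) hϖ
  simp only [PiLp.inner_apply, PiLp.sub_apply, RCLike.inner_apply, conj_trivial,
    ← Finset.sum_neg_distrib, ← Finset.sum_sub_distrib]
  exact Finset.sum_le_sum fun j _ => by linarith [hcoord j]

end softVec

theorem StrictConvexOn.comp_affineMap {𝕜 E F β : Type*} [Field 𝕜] [LinearOrder 𝕜]
    [AddCommGroup E] [AddCommGroup F] [Module 𝕜 E] [Module 𝕜 F]
    [AddCommMonoid β] [PartialOrder β] [SMul 𝕜 β] {f : F → β} {s : Set F}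
    (hf : StrictConvexOn 𝕜 s f) (g : E →ᵃ[𝕜] F) (hg : Function.Injective g) :
    StrictConvexOn 𝕜 (g ⁻¹' s) (f ∘ g) :=
  ⟨hf.1.affine_preimage g, fun x hx y hy hxy a b ha hb hab => by
    simpa only [Function.comp, Convex.combo_affine_apply hab] using
      hf.2 hx hy (hg.ne hxy) ha hb hab⟩

theorem fderiv_fderiv_apply_comm {𝕜 E F : Type*} [NontriviallyNormedField 𝕜]
    [NormedAddCommGroup E] [NormedSpace 𝕜 E] [NormedAddCommGroup F] [NormedSpace 𝕜 F]
    {f : E → F} {z : E} (hf : DifferentiableAt 𝕜 (fderiv 𝕜 f) z) (v w : E) :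
    fderiv 𝕜 (fun x => fderiv 𝕜 f x v) z w = fderiv 𝕜 (fderiv 𝕜 f) z w v := by
  rw [fderiv_clm_apply hf (differentiableAt_const v)]
  simp

theorem LinearMap.IsSymmetric.norm_le_of_abs_inner_self_le {E : Type*} [NormedAddCommGroup E]
    [InnerProductSpace ℝ E] {T : E →L[ℝ] E} (hT : (T : E →ₗ[ℝ] E).IsSymmetric) {c : ℝ}
    (hc : 0 ≤ c) (h : ∀ v, |⟪T v, v⟫| ≤ c * ‖v‖ ^ 2) : ‖T‖ ≤ c := by
  rw [T.norm_eq_iSup_rayleighQuotient hT]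
  refine ciSup_le fun v => ?_
  rcases eq_or_ne v 0 with rfl | hv
  · simpa using hc
  · rw [ContinuousLinearMap.rayleighQuotient, ContinuousLinearMap.reApplyInnerSelf_apply,
      abs_div, abs_sq, div_le_iff₀ (by positivity)]
    simpa using h v

section gradient

variable {E : Type*} [NormedAddCommGroup E] [InnerProductSpace ℝ E] [CompleteSpace E]
  {g : E → ℝ} {z : E}

theorem StrictConvexOn.inner_gradient_lt_sub (hg : StrictConvexOn ℝ univ g) {x y : E}
    (hx : DifferentiableAt ℝ g x) (hxy : x ≠ y) :
    ⟪gradient g x, y - x⟫ < g y - g x := by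
  set φ : ℝ → ℝ := g ∘ AffineMap.lineMap x y
  have hφ : StrictConvexOn ℝ univ φ :=
    hg.comp_affineMap (AffineMap.lineMap x y) (AffineMap.lineMap_injective ℝ hxy)
  have hφ' : HasDerivAt φ (fderiv ℝ g x (y - x)) 0 := by
    refine HasFDerivAt.comp_hasDerivAt (0 : ℝ) ?_ AffineMap.hasDerivAt_lineMap
    simpa using hx.hasFDerivAt
  simpa [φ, inner_gradient_left, slope] using
    hφ.lt_slope_of_hasDerivAt (mem_univ 0) (mem_univ 1) one_pos hφ'

theorem hasFDerivAt_gradient (hg : DifferentiableAt ℝ (fderiv ℝ g) z) :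
    HasFDerivAt (gradient g) ((toDual ℝ E).symm.toContinuousLinearEquiv.toContinuousLinearMap.comp
      (fderiv ℝ (fderiv ℝ g) z)) z :=
  (toDual ℝ E).symm.toContinuousLinearEquiv.hasFDerivAt.comp z hg.hasFDerivAt

theorem inner_fderiv_gradient_apply (hg : DifferentiableAt ℝ (fderiv ℝ g) z) (v w : E) :
    ⟪fderiv ℝ (gradient g) z v, w⟫ = fderiv ℝ (fderiv ℝ g) z v w := by
  rw [(hasFDerivAt_gradient hg).fderiv]
  exact toDual_symm_apply

theorem fderiv_fderiv_apply_self_le (hg : DifferentiableAt ℝ (fderiv ℝ g) z) {Λ : ℝ}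
    (hΛ : 0 ≤ Λ) (hLip : ∀ x y, ‖gradient g x - gradient g y‖ ≤ Λ * ‖x - y‖) (v : E) :
    fderiv ℝ (fderiv ℝ g) z v v ≤ Λ * ‖v‖ ^ 2 := by
  have hH : ‖fderiv ℝ (gradient g) z‖ ≤ Λ :=
    norm_fderiv_le_of_lip' ℝ hΛ (Filter.Eventually.of_forall fun x => hLip x z)
  rw [← inner_fderiv_gradient_apply hg]
  calc ⟪fderiv ℝ (gradient g) z v, v⟫ ≤ ‖fderiv ℝ (gradient g) z v‖ * ‖v‖ :=
        real_inner_le_norm _ _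
    _ ≤ ‖fderiv ℝ (gradient g) z‖ * ‖v‖ * ‖v‖ := by gcongr; exact ContinuousLinearMap.le_opNorm _ _
    _ ≤ Λ * ‖v‖ ^ 2 := by rw [mul_assoc, ← sq]; gcongr

theorem norm_sub_smul_gradient_sub_le (hg : ContDiff ℝ 2 g) {a b ϖ : ℝ} (hϖ : 0 ≤ ϖ)
    (ha : ∀ z v, a * ‖v‖ ^ 2 ≤ fderiv ℝ (fderiv ℝ g) z v v)
    (hb : ∀ z v, fderiv ℝ (fderiv ℝ g) z v v ≤ b * ‖v‖ ^ 2) (x y : E) :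
    ‖(x - ϖ • gradient g x) - (y - ϖ • gradient g y)‖ ≤
      max |1 - ϖ * a| |1 - ϖ * b| * ‖x - y‖ := by
  have hd : ∀ z, DifferentiableAt ℝ (fderiv ℝ g) z :=
    (hg.fderiv_right one_add_one_eq_two.le).differentiable one_ne_zero
  set B : E → E →L[ℝ] E := fun z => ContinuousLinearMap.id ℝ E - ϖ • fderiv ℝ (gradient g) z
  have hB : ∀ z, HasFDerivAt (fun w => w - ϖ • gradient g w) (B z) z := fun z =>
    (hasFDerivAt_id z).sub
      ((hasFDerivAt_gradient (hd z)).differentiableAt.hasFDerivAt.const_smul ϖ)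
  have hBinner : ∀ z v w, ⟪B z v, w⟫ = ⟪v, w⟫ - ϖ * fderiv ℝ (fderiv ℝ g) z v w :=
    fun z v w => by
      simp [B, inner_sub_left, real_inner_smul_left, inner_fderiv_gradient_apply (hd z)]
  have hBsymm : ∀ z, (B z : E →ₗ[ℝ] E).IsSymmetric := fun z v w => by
    simp only [ContinuousLinearMap.coe_coe]
    rw [real_inner_comm (B z w) v, hBinner, hBinner,
      (hg.contDiffAt.isSymmSndFDerivAt (by simp)).eq, real_inner_comm]
  have hBnorm : ∀ z, ‖B z‖ ≤ max |1 - ϖ * a| |1 - ϖ * b| := fun z =>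
    (hBsymm z).norm_le_of_abs_inner_self_le (by positivity) fun v => by
      have hlow : (1 - ϖ * b) * ‖v‖ ^ 2 ≤ ‖v‖ ^ 2 - ϖ * fderiv ℝ (fderiv ℝ g) z v v := by
        nlinarith [mul_le_mul_of_nonneg_left (hb z v) hϖ]
      have hupp : ‖v‖ ^ 2 - ϖ * fderiv ℝ (fderiv ℝ g) z v v ≤ (1 - ϖ * a) * ‖v‖ ^ 2 := by
        nlinarith [mul_le_mul_of_nonneg_left (ha z v) hϖ]
      rw [hBinner, real_inner_self_eq_norm_sq]
      calc _ ≤ max |(1 - ϖ * b) * ‖v‖ ^ 2| |(1 - ϖ * a) * ‖v‖ ^ 2| :=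
            abs_le_max_abs_abs hlow hupp
        _ = _ := by
          rw [abs_mul, abs_mul, abs_of_nonneg (sq_nonneg ‖v‖),
            ← max_mul_of_nonneg _ _ (sq_nonneg _), max_comm]
  simpa using convex_univ.norm_image_sub_le_of_norm_hasFDerivWithin_le
    (fun z _ => (hB z).hasFDerivWithinAt) (fun z _ => hBnorm z) (mem_univ y) (mem_univ x)

end gradient

theorem max_abs_one_sub_mul_lt_one {a b ϖ : ℝ} (ha : 0 < a) (hab : a ≤ b) (hϖ : 0 < ϖ)
    (hϖb : ϖ * b < 2) : max |1 - ϖ * a| |1 - ϖ * b| < 1 := by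
  have : ϖ * a ≤ ϖ * b := mul_le_mul_of_nonneg_left hab hϖ.le
  have : 0 < ϖ * a := mul_pos hϖ ha
  exact max_lt (abs_lt.2 ⟨by linarith, by linarith⟩) (abs_lt.2 ⟨by linarith, by linarith⟩)

/-- Convergence of iterated soft-thresholding to the unique minimizer of
g(β) + Σ_j τ_j|β_j| for strongly convex g with Lipschitz gradient. -/
theorem iterated_soft_thresholding_converges {p : ℕ}
    (g : EuclideanSpace ℝ (Fin p) → ℝ) (l Λ ϖ : ℝ) (τ : EuclideanSpace ℝ (Fin p))
    (hl : 0 < l) (hC2 : ContDiff ℝ 2 g)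
    (hstrict : StrictConvexOn ℝ Set.univ g)
    (hHessLow : ∀ β v : EuclideanSpace ℝ (Fin p),
      l * ‖v‖ ^ 2 ≤ fderiv ℝ (fun x => fderiv ℝ g x v) β v)
    (hLip : ∀ x y : EuclideanSpace ℝ (Fin p),
      ‖gradient g x - gradient g y‖ ≤ Λ * ‖x - y‖)
    (hτ : ∀ j, 0 ≤ τ j) (hϖ0 : 0 < ϖ) (hϖ2 : ϖ < 2 / Λ) :
    ∃ βs : EuclideanSpace ℝ (Fin p),
      (∀ β : EuclideanSpace ℝ (Fin p), β ≠ βs →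
        g βs + ∑ j, τ j * |βs j| < g β + ∑ j, τ j * |β j|) ∧
      (∀ b : ℕ → EuclideanSpace ℝ (Fin p),
        (∀ n, b (n + 1) = softVec (b n - ϖ • gradient g (b n)) (ϖ • τ)) →
        Filter.Tendsto b Filter.atTop (nhds βs)) := by
  have hΛ : 0 < Λ := (div_pos_iff_of_pos_left two_pos).1 (hϖ0.trans hϖ2)
  have hd : ∀ z, DifferentiableAt ℝ (fderiv ℝ g) z :=
    (hC2.fderiv_right one_add_one_eq_two.le).differentiable one_ne_zero
  -- `min l Λ` rather than `l`: on the zero space nothing forces `l ≤ Λ`.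
  have hstep := norm_sub_smul_gradient_sub_le hC2 hϖ0.le (a := min l Λ)
    (fun z v => (mul_le_mul_of_nonneg_right (min_le_left l Λ) (sq_nonneg _)).trans
      ((hHessLow z v).trans_eq (fderiv_fderiv_apply_comm (hd z) v v)))
    (fun z v => fderiv_fderiv_apply_self_le (hd z) hΛ.le hLip v)
  set T := fun x => softVec (x - ϖ • gradient g x) (ϖ • τ)
  have hT : ContractingWith (max |1 - ϖ * min l Λ| |1 - ϖ * Λ|).toNNReal T :=
    ⟨Real.toNNReal_lt_one.2 (max_abs_one_sub_mul_lt_one (lt_min hl hΛ) (min_le_right l Λ)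
      hϖ0 ((lt_div_iff₀ hΛ).1 hϖ2)),
    LipschitzWith.of_dist_le' fun x y => (dist_softVec_le
      (fun j => mul_nonneg hϖ0.le (hτ j)) _ _).trans (by simpa [dist_eq_norm] using hstep x y)⟩
  refine ⟨hT.fixedPoint, fun β hβ => ?_, fun b hb => ?_⟩
  · have hconv := hstrict.inner_gradient_lt_sub (hC2.differentiable two_ne_zero _) hβ.symm
    have hsubgrad := neg_inner_sub_le_of_softVec_eq hϖ0 hτ hT.fixedPoint_isFixedPt β
    linarith
  · have hiter : b = fun n => T^[n] (b 0) := by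
      funext n
      induction n with
      | zero => rfl
      | succ n ih => rw [hb n, ih, Function.iterate_succ_apply']
    exact hiter ▸ hT.tendsto_iterate_fixedPoint (b 0)
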